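/- Let A be a commutative associative unital ℂ-algebra and D a derivation of A. Then the superspace L(A,D) = A ⊕ ηA with bracket [a,b] = aD(b) - D(a)b, [a, ηb] = η(aD(b) - (1/2)D(a)b), [ηa, ηb] = ab (even·even, even·odd, odd·odd respectively) is a Lie superalgebra: the bracket is super-skewsymmetric and satisfies the super Jacobi identity. -/

import Mathlib

/-
The even part `A` is the Witt-type Lie algebra with bracket `wittBracket a b = a D b - D a b`,
and the odd part is `A` with the action `oddAction a b = a D b - ½ D a b`. The super Jacobi sum
is invariant under rotating `(x, y, z)` together with their parities, so only the parity
patterns even-even-even, even-even-odd, even-odd-odd and odd-odd-odd need checking. They say,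
respectively, that `wittBracket` satisfies the Jacobi identity, that `oddAction` is a
representation of it, that the product of two odd elements is equivariant, and that
`(ab)·c + (bc)·a + (ca)·b = 0`. After expanding with the Leibniz rule each is a polynomial
identity in `A`; the factor `½` is exactly what makes the last two hold.
-/

/-- The parity grading on `A × A`: `A × 0` is the even part, `0 × A` the odd part. -/
def evenodd (A : Type*) [AddCommGroup A] [Module ℂ A] (i : ZMod 2) :
    Submodule ℂ (A × A) :=
  if i = 0 then (⊤ : Submodule ℂ A).prod ⊥ else (⊥ : Submodule ℂ A).prod ⊤

/-- The bracket of `L(A,D) = A ⊕ ηA`: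
`[a,b] = aD(b) - D(a)b`, `[a, ηb] = η(aD(b) - (1/2)D(a)b)`, `[ηa, ηb] = ab`. -/
noncomputable def lbr {A : Type*} [CommRing A] [Algebra ℂ A]
    (D : A →ₗ[ℂ] A) (u v : A × A) : A × A :=
  (u.1 * D v.1 - D u.1 * v.1 + u.2 * v.2,
   (u.1 * D v.2 - (1/2 : ℂ) • (D u.1 * v.2)) - (v.1 * D u.2 - (1/2 : ℂ) • (D v.1 * u.2)))

theorem zmod_two_eq_zero_or_eq_one (i : ZMod 2) : i = 0 ∨ i = 1 := by
  decide +revert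

section Grading

variable {A : Type*} [AddCommGroup A] [Module ℂ A]

theorem mem_evenodd_zero {x : A × A} : x ∈ evenodd A 0 ↔ ∃ a, x = (a, 0) := by
  simp [evenodd, Submodule.mem_prod, Prod.ext_iff]

theorem mem_evenodd_one {x : A × A} : x ∈ evenodd A 1 ↔ ∃ a, x = (0, a) := by
  simp [evenodd, Submodule.mem_prod, Prod.ext_iff]

end Grading

section Bracket

variable {A : Type*} [CommRing A] [Algebra ℂ A] (D : A →ₗ[ℂ] A)

def wittBracket (a b : A) : A := a * D b - D a * b

noncomputable def oddAction (a b : A) : A := a * D b - (1/2 : ℂ) • (D a * b)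

theorem wittBracket_swap (a b : A) : wittBracket D b a = -wittBracket D a b := by
  simp only [wittBracket]; ring

theorem oddAction_neg (a b : A) : oddAction D a (-b) = -oddAction D a b := by
  simp only [oddAction, map_neg, mul_neg, smul_neg]; abel

theorem lbr_even_even (a b : A) : lbr D (a, 0) (b, 0) = (wittBracket D a b, 0) := by
  simp [lbr, wittBracket]

theorem lbr_even_odd (a b : A) : lbr D (a, 0) (0, b) = (0, oddAction D a b) := by
  simp [lbr, oddAction]

theorem lbr_odd_even (a b : A) : lbr D (0, a) (b, 0) = (0, -oddAction D b a) := by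
  simp [lbr, oddAction]

theorem lbr_odd_odd (a b : A) : lbr D (0, a) (0, b) = (a * b, 0) := by
  simp [lbr]

theorem lbr_mem_evenodd {i j : ZMod 2} {x y : A × A} (hx : x ∈ evenodd A i)
    (hy : y ∈ evenodd A j) : lbr D x y ∈ evenodd A (i + j) := by
  rcases zmod_two_eq_zero_or_eq_one i with rfl | rfl <;>
    rcases zmod_two_eq_zero_or_eq_one j with rfl | rfl <;>
    simp only [mem_evenodd_zero, mem_evenodd_one] at hx hy <;>
    obtain ⟨a, rfl⟩ := hx <;> obtain ⟨b, rfl⟩ := hy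
  all_goals simp [lbr_even_even, lbr_even_odd, lbr_odd_even, lbr_odd_odd, mem_evenodd_zero,
    mem_evenodd_one, CharTwo.add_self_eq_zero]

theorem lbr_super_skew {i j : ZMod 2} {x y : A × A} (hx : x ∈ evenodd A i)
    (hy : y ∈ evenodd A j) : lbr D x y = -(((-1 : ℂ) ^ (i.val * j.val)) • lbr D y x) := by
  rcases zmod_two_eq_zero_or_eq_one i with rfl | rfl <;>
    rcases zmod_two_eq_zero_or_eq_one j with rfl | rfl <;>
    simp only [mem_evenodd_zero, mem_evenodd_one] at hx hy <;>
    obtain ⟨a, rfl⟩ := hx <;> obtain ⟨b, rfl⟩ := hy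
  all_goals simp [lbr_even_even, lbr_even_odd, lbr_odd_even, lbr_odd_odd, ZMod.val_one, mul_comm]
  exact wittBracket_swap D b a

noncomputable def superJacobi (i j k : ZMod 2) (x y z : A × A) : A × A :=
  ((-1 : ℂ) ^ (i.val * k.val)) • lbr D (lbr D x y) z
    + ((-1 : ℂ) ^ (j.val * i.val)) • lbr D (lbr D y z) x
    + ((-1 : ℂ) ^ (k.val * j.val)) • lbr D (lbr D z x) y

theorem superJacobi_rotate (i j k : ZMod 2) (x y z : A × A) :
    superJacobi D i j k x y z = superJacobi D j k i y z x :=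
  add_rotate _ _ _

theorem two_mul_algebraMap_half : (2 : A) * algebraMap ℂ A (1/2) = 1 := by
  rw [← map_ofNat (algebraMap ℂ A) 2, ← map_mul]; norm_num

variable {D} (hD : ∀ a b : A, D (a * b) = a * D b + D a * b)
include hD

theorem wittBracket_jacobi (a b c : A) :
    wittBracket D (wittBracket D a b) c + wittBracket D (wittBracket D b c) a
      + wittBracket D (wittBracket D c a) b = 0 := by
  simp only [wittBracket, map_sub, hD]; ring

theorem oddAction_wittBracket (a b c : A) :
    oddAction D (wittBracket D a b) c =
      oddAction D a (oddAction D b c) - oddAction D b (oddAction D a c) := by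
  -- `grind` sees `algebraMap ℂ A (1/2)` as an opaque ring element, so it needs `half`.
  have half := two_mul_algebraMap_half (A := A)
  simp only [wittBracket, oddAction, map_sub, map_smul, hD]
  simp only [Algebra.smul_def]
  grind

theorem oddAction_mul_add (a b c : A) :
    oddAction D a b * c + oddAction D a c * b = wittBracket D a (b * c) := by
  have half := two_mul_algebraMap_half (A := A)
  simp only [wittBracket, oddAction, hD, Algebra.smul_def]
  grind

theorem oddAction_mul_cyclic (a b c : A) :
    oddAction D (a * b) c + oddAction D (b * c) a + oddAction D (c * a) b = 0 := by
  have half := two_mul_algebraMap_half (A := A)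
  simp only [oddAction, hD, Algebra.smul_def]
  grind

theorem superJacobi_even_even_even {x y z : A × A} (hx : x ∈ evenodd A 0)
    (hy : y ∈ evenodd A 0) (hz : z ∈ evenodd A 0) : superJacobi D 0 0 0 x y z = 0 := by
  obtain ⟨a, rfl⟩ := mem_evenodd_zero.1 hx
  obtain ⟨b, rfl⟩ := mem_evenodd_zero.1 hy
  obtain ⟨c, rfl⟩ := mem_evenodd_zero.1 hz
  simp [superJacobi, lbr_even_even, wittBracket_jacobi hD]

theorem superJacobi_even_even_odd {x y z : A × A} (hx : x ∈ evenodd A 0)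
    (hy : y ∈ evenodd A 0) (hz : z ∈ evenodd A 1) : superJacobi D 0 0 1 x y z = 0 := by
  obtain ⟨a, rfl⟩ := mem_evenodd_zero.1 hx
  obtain ⟨b, rfl⟩ := mem_evenodd_zero.1 hy
  obtain ⟨c, rfl⟩ := mem_evenodd_one.1 hz
  simp [superJacobi, lbr_even_even, lbr_even_odd, lbr_odd_even, oddAction_neg,
    oddAction_wittBracket hD]
  abel

theorem superJacobi_even_odd_odd {x y z : A × A} (hx : x ∈ evenodd A 0)
    (hy : y ∈ evenodd A 1) (hz : z ∈ evenodd A 1) : superJacobi D 0 1 1 x y z = 0 := by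
  obtain ⟨a, rfl⟩ := mem_evenodd_zero.1 hx
  obtain ⟨b, rfl⟩ := mem_evenodd_one.1 hy
  obtain ⟨c, rfl⟩ := mem_evenodd_one.1 hz
  simp [superJacobi, lbr_even_even, lbr_even_odd, lbr_odd_even, lbr_odd_odd, ZMod.val_one]
  linear_combination oddAction_mul_add hD a b c + wittBracket_swap D a (b * c)

theorem superJacobi_odd_odd_odd {x y z : A × A} (hx : x ∈ evenodd A 1)
    (hy : y ∈ evenodd A 1) (hz : z ∈ evenodd A 1) : superJacobi D 1 1 1 x y z = 0 := by
  obtain ⟨a, rfl⟩ := mem_evenodd_one.1 hx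
  obtain ⟨b, rfl⟩ := mem_evenodd_one.1 hy
  obtain ⟨c, rfl⟩ := mem_evenodd_one.1 hz
  simp [superJacobi, lbr_even_odd, lbr_odd_odd, ZMod.val_one]
  linear_combination -oddAction_mul_cyclic hD a b c

theorem superJacobi_eq_zero {i j k : ZMod 2} {x y z : A × A} (hx : x ∈ evenodd A i)
    (hy : y ∈ evenodd A j) (hz : z ∈ evenodd A k) : superJacobi D i j k x y z = 0 := by
  rcases zmod_two_eq_zero_or_eq_one i with rfl | rfl <;>
    rcases zmod_two_eq_zero_or_eq_one j with rfl | rfl <;>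
    rcases zmod_two_eq_zero_or_eq_one k with rfl | rfl
  · exact superJacobi_even_even_even hD hx hy hz
  · exact superJacobi_even_even_odd hD hx hy hz
  · rw [superJacobi_rotate, superJacobi_rotate]
    exact superJacobi_even_even_odd hD hz hx hy
  · exact superJacobi_even_odd_odd hD hx hy hz
  · rw [superJacobi_rotate]
    exact superJacobi_even_even_odd hD hy hz hx
  · rw [superJacobi_rotate]
    exact superJacobi_even_odd_odd hD hy hz hx
  · rw [superJacobi_rotate, superJacobi_rotate]
    exact superJacobi_even_odd_odd hD hz hx hy
  · exact superJacobi_odd_odd_odd hD hx hy hz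

end Bracket

/-- For a commutative associative unital ℂ-algebra `A` with derivation `D`,
`L(A,D) = A ⊕ ηA` with the above bracket is a Lie superalgebra: the bracket respects
the grading, is super-skewsymmetric, and satisfies the super Jacobi identity. -/
theorem stmt_3 (A : Type*) [CommRing A] [Algebra ℂ A]
    (D : A →ₗ[ℂ] A) (hD : ∀ a b : A, D (a * b) = a * D b + D a * b) :
    (∀ (i j : ZMod 2) (x y : A × A), x ∈ evenodd A i → y ∈ evenodd A j →
        lbr D x y ∈ evenodd A (i + j)) ∧
    (∀ (i j : ZMod 2) (x y : A × A), x ∈ evenodd A i → y ∈ evenodd A j →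
        lbr D x y = -(((-1 : ℂ) ^ (i.val * j.val)) • lbr D y x)) ∧
    (∀ (i j k : ZMod 2) (x y z : A × A),
        x ∈ evenodd A i → y ∈ evenodd A j → z ∈ evenodd A k →
        ((-1 : ℂ) ^ (i.val * k.val)) • lbr D (lbr D x y) z
          + ((-1 : ℂ) ^ (j.val * i.val)) • lbr D (lbr D y z) x
          + ((-1 : ℂ) ^ (k.val * j.val)) • lbr D (lbr D z x) y = 0) :=
  ⟨fun _ _ _ _ => lbr_mem_evenodd D, fun _ _ _ _ => lbr_super_skew D,
    fun _ _ _ _ _ _ => superJacobi_eq_zero hD⟩
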